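/- Let n > 1 and let I₁, …, Iₙ be bounded nonempty open intervals of ℝ whose union is connected. Then the intervals can be re-indexed by a permutation σ of {1, …, n} so that for every k = 1, …, n−1, the union Iσ(1) ∪ ⋯ ∪ Iσ(k) is connected and has nonempty intersection with Iσ(k+1). -/

import Mathlib

/-!
Call two indices adjacent when their intervals overlap. This overlap graph is connected, since
otherwise the intervals indexed by one connected component and those indexed by the rest would
split the union into two disjoint nonempty open sets. Listing the indices in breadth-first order
from any root, every interval after the first overlaps an earlier one, and adding one at a time
intervals that meet the current union keeps that union connected.
-/

open Set

section

variable {X ι : Type*}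

theorem exists_inter_nonempty_of_isPreconnected_iUnion [TopologicalSpace X]
    {U : ι → Set X} (hU : ∀ i, IsOpen (U i)) (hne : ∀ i, (U i).Nonempty)
    (hconn : IsPreconnected (⋃ i, U i)) {s : Set ι} {i j : ι} (hi : i ∈ s) (hj : j ∉ s) :
    ∃ a ∈ s, ∃ b ∉ s, (U a ∩ U b).Nonempty := by
  have hcover : ⋃ i, U i ⊆ (⋃ a ∈ s, U a) ∪ ⋃ b ∈ sᶜ, U b := by
    refine iUnion_subset fun a => ?_
    by_cases ha : a ∈ s
    · exact subset_union_of_subset_left (subset_biUnion_of_mem ha) _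
    · exact subset_union_of_subset_right (subset_biUnion_of_mem (u := U) ha) _
  obtain ⟨x, -, hxs, hxsc⟩ := hconn _ _ (isOpen_biUnion fun a _ => hU a)
    (isOpen_biUnion fun b _ => hU b) hcover
    (let ⟨x, hx⟩ := hne i; ⟨x, mem_iUnion_of_mem i hx, mem_biUnion hi hx⟩)
    (let ⟨x, hx⟩ := hne j; ⟨x, mem_iUnion_of_mem j hx, mem_biUnion (show j ∈ sᶜ from hj) hx⟩)
  obtain ⟨a, ha, hxa⟩ := mem_iUnion₂.mp hxs
  obtain ⟨b, hb, hxb⟩ := mem_iUnion₂.mp hxsc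
  exact ⟨a, ha, b, hb, x, hxa, hxb⟩

def overlapGraph (U : ι → Set X) : SimpleGraph ι where
  Adj i j := i ≠ j ∧ (U i ∩ U j).Nonempty
  symm := ⟨fun _ _ h => ⟨h.1.symm, inter_comm (U _) _ ▸ h.2⟩⟩
  loopless := ⟨fun _ h => h.1 rfl⟩

theorem overlapGraph_adj {U : ι → Set X} {i j : ι} :
    (overlapGraph U).Adj i j ↔ i ≠ j ∧ (U i ∩ U j).Nonempty :=
  Iff.rfl

theorem overlapGraph_connected [TopologicalSpace X] [Nonempty ι]
    {U : ι → Set X} (hU : ∀ i, IsOpen (U i)) (hne : ∀ i, (U i).Nonempty)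
    (hconn : IsPreconnected (⋃ i, U i)) : (overlapGraph U).Connected := by
  refine .mk fun i j => ?_
  by_contra hij
  obtain ⟨a, ha, b, hb, hab⟩ := exists_inter_nonempty_of_isPreconnected_iUnion hU hne hconn
    (s := {j | (overlapGraph U).Reachable i j}) SimpleGraph.Reachable.rfl hij
  have hadj : (overlapGraph U).Adj a b :=
    overlapGraph_adj.mpr ⟨fun h => hb (h ▸ ha), hab⟩
  exact hb (ha.trans hadj.reachable)

end

namespace SimpleGraph

variable {V : Type*} {G : SimpleGraph V}

theorem Reachable.exists_adj_dist_lt {u v : V} (h : G.Reachable u v) (hne : u ≠ v) :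
    ∃ w, G.Adj w v ∧ G.dist u w < G.dist u v := by
  obtain ⟨p, hp⟩ := h.symm.exists_walk_length_eq_dist
  cases p with
  | nil => exact absurd rfl hne
  | cons hadj q =>
    refine ⟨_, hadj.symm, ?_⟩
    rw [dist_comm, dist_comm (u := u), ← hp, Walk.length_cons]
    exact Nat.lt_succ_of_le (dist_le q)

theorem Connected.exists_perm_exists_lt_adj {n : ℕ} {G : SimpleGraph (Fin n)}
    (hG : G.Connected) :
    ∃ σ : Equiv.Perm (Fin n), ∀ j : Fin n, 0 < (j : ℕ) → ∃ i < j, G.Adj (σ i) (σ j) := by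
  obtain ⟨root⟩ := hG.nonempty
  let σ := Tuple.sort fun v => G.dist root v
  have hmono : Monotone fun j => G.dist root (σ j) :=
    Tuple.monotone_sort fun v => G.dist root v
  refine ⟨σ, fun j hj => ?_⟩
  have hroot : root ≠ σ j := by
    intro h
    let first : Fin n := ⟨0, j.pos⟩
    have h0 : G.dist root (σ first) = 0 := by
      simpa [← h] using hmono (show first ≤ j from Nat.zero_le _)
    have := σ.injective ((hG.dist_eq_zero_iff.mp h0).symm.trans h)
    exact hj.ne (congrArg Fin.val this)
  obtain ⟨w, hadj, hlt⟩ := (hG.preconnected root (σ j)).exists_adj_dist_lt hroot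
  refine ⟨σ.symm w, ?_, by simpa using hadj⟩
  by_contra hle
  exact (hmono (not_lt.mp hle)).not_gt (by simpa using hlt)

end SimpleGraph

section

variable {X : Type*} {n : ℕ} {V : Fin n → Set X}

theorem iUnion_val_eq {m : ℕ} (hm : m < n) :
    ⋃ j : Fin n, ⋃ (_ : (j : ℕ) = m), V j = V ⟨m, hm⟩ := by
  have : ∀ j : Fin n, (j : ℕ) = m ↔ j = ⟨m, hm⟩ := fun _ => Fin.eq_mk_iff_val_eq.symm
  simp only [this, iUnion_iUnion_eq_left]

theorem iUnion_val_le_succ {k : ℕ} (hk : k + 1 < n) :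
    ⋃ j : Fin n, ⋃ (_ : (j : ℕ) ≤ k + 1), V j =
      (⋃ j : Fin n, ⋃ (_ : (j : ℕ) ≤ k), V j) ∪ V ⟨k + 1, hk⟩ := by
  simp only [Nat.le_succ_iff, iUnion_or, iUnion_union_distrib, iUnion_val_eq hk]

theorem inter_nonempty_of_exists_lt_inter_nonempty
    (hov : ∀ j : Fin n, 0 < (j : ℕ) → ∃ i < j, (V i ∩ V j).Nonempty) {k : ℕ} (hk : k + 1 < n) :
    ((⋃ j : Fin n, ⋃ (_ : (j : ℕ) ≤ k), V j) ∩ V ⟨k + 1, hk⟩).Nonempty := by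
  obtain ⟨i, hi, x, hxi, hx⟩ := hov ⟨k + 1, hk⟩ k.succ_pos
  exact ⟨x, mem_iUnion₂.mpr ⟨i, Nat.lt_succ_iff.mp hi, hxi⟩, hx⟩

theorem isConnected_iUnion_val_le [TopologicalSpace X] (hV : ∀ j, IsConnected (V j))
    (hov : ∀ j : Fin n, 0 < (j : ℕ) → ∃ i < j, (V i ∩ V j).Nonempty) :
    ∀ k, k < n → IsConnected (⋃ j : Fin n, ⋃ (_ : (j : ℕ) ≤ k), V j)
  | 0, hn => by simpa only [Nat.le_zero, iUnion_val_eq hn] using hV _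
  | k + 1, hk => by
    rw [iUnion_val_le_succ hk]
    exact (isConnected_iUnion_val_le hV hov k (by omega)).union
      (inter_nonempty_of_exists_lt_inter_nonempty hov hk) (hV _)

end

theorem exists_perm_chain_of_isConnected_union (n : ℕ) (hn : 1 < n)
    (c d : Fin n → ℝ) (hcd : ∀ k, c k < d k)
    (hconn : IsConnected (⋃ k, Set.Ioo (c k) (d k))) :
    ∃ σ : Equiv.Perm (Fin n), ∀ k : ℕ, (hk : k + 1 < n) →
      IsConnected (⋃ j : Fin n, ⋃ (_ : (j : ℕ) ≤ k), Set.Ioo (c (σ j)) (d (σ j))) ∧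
      ((⋃ j : Fin n, ⋃ (_ : (j : ℕ) ≤ k), Set.Ioo (c (σ j)) (d (σ j))) ∩
        Set.Ioo (c (σ ⟨k + 1, hk⟩)) (d (σ ⟨k + 1, hk⟩))).Nonempty := by
  have : Nonempty (Fin n) := ⟨⟨0, by omega⟩⟩
  obtain ⟨σ, hσ⟩ := (overlapGraph_connected (fun _ => isOpen_Ioo)
    (fun k => nonempty_Ioo.mpr (hcd k)) hconn.isPreconnected).exists_perm_exists_lt_adj
  have hov : ∀ j : Fin n, 0 < (j : ℕ) → ∃ i < j,
      (Ioo (c (σ i)) (d (σ i)) ∩ Ioo (c (σ j)) (d (σ j))).Nonempty :=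
    fun j hj => (hσ j hj).imp fun _ ⟨hij, hadj⟩ => ⟨hij, (overlapGraph_adj.mp hadj).2⟩
  exact ⟨σ, fun k hk => ⟨isConnected_iUnion_val_le (fun j => isConnected_Ioo (hcd (σ j))) hov k
    (by omega), inter_nonempty_of_exists_lt_inter_nonempty hov hk⟩⟩
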